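/- Let k ≥ 1, let q be a unit imaginary quaternion with q ≠ ±i, and let W_{k,q} ⊆ ℍ^k be the real vector subspace of all vectors of the form (a₁ + b₁q + b₂i, a₂ + b₂q + b₃i, …, a_{k−1} + b_{k−1}q + b_k i, a_k + b_k q), where a₁, b₁, …, a_k, b_k are real numbers. Then the real vector space W_{k,q} ∩ q•W_{k,q} has dimension two. -/

import Mathlib

open Quaternion

/-- The quaternion unit `i`. -/
noncomputable def iq : Quaternion ℝ := ⟨0, 1, 0, 0⟩

/-- Componentwise left multiplication by a quaternion `p` on `ℍ^n`, as a real-linear map. -/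
noncomputable def mulLeftLM (n : ℕ) (p : Quaternion ℝ) :
    (Fin n → Quaternion ℝ) →ₗ[ℝ] (Fin n → Quaternion ℝ) :=
  LinearMap.pi fun i => (LinearMap.mulLeft ℝ p).comp (LinearMap.proj i)

/-- The model subspace `W_{k,q} ⊆ ℍ^k` (with `u` the extra imaginary unit, `u = i` when
`q ≠ ±i`): all vectors `(a₁ + b₁q + b₂u, a₂ + b₂q + b₃u, …, a_{k−1} + b_{k−1}q + b_k u,
a_k + b_k q)` with the `a`'s and `b`'s real. -/
noncomputable def WkSub (k : ℕ) (q u : Quaternion ℝ) :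
    Submodule ℝ (Fin k → Quaternion ℝ) where
  carrier := {y | ∃ (a : Fin k → ℝ) (b : ℕ → ℝ), (∀ m, k ≤ m → b m = 0) ∧
    ∀ t : Fin k, y t = ((a t : ℝ) : ℍ[ℝ]) + b t • q + b ((t : ℕ) + 1) • u}
  add_mem' := by
    rintro y y' ⟨a, b, hb, hy⟩ ⟨a', b', hb', hy'⟩
    refine ⟨a + a', fun m => b m + b' m, fun m hm => by simp [hb m hm, hb' m hm], fun t => ?_⟩
    simp only [Pi.add_apply, hy t, hy' t]
    push_cast
    module
  zero_mem' :=
    ⟨0, 0, fun m _ => rfl, fun t => by simp⟩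
  smul_mem' := by
    rintro r y ⟨a, b, hb, hy⟩
    refine ⟨r • a, fun m => r * b m, fun m hm => by simp [hb m hm], fun t => ?_⟩
    simp only [Pi.smul_apply, hy t]
    ext <;> simp <;> ring

/-! Write `y ∈ W ∩ q•W` as `y = q•w` with `y, w ∈ W`. Since `q² = -1`, the `t`-th component of
`q•w` is `-b'ₜ + a'ₜ q + b'ₜ₊₁ q i`, while that of `y` is `aₜ + bₜ q + bₜ₊₁ i`. For `q ≠ ±i` the
quaternions `1, q, i, q i` are linearly independent over `ℝ`, so comparing coefficients gives
`bₜ₊₁ = b'ₜ₊₁ = 0` and `aₜ = -b'ₜ` for all `t`. Hence all components but the first vanish and the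
first lies in `ℝ + ℝ q`; conversely `(α + β q, 0, …, 0) = q • (β - α q, 0, …, 0)` lies in both. -/

@[simp] theorem re_iq : iq.re = 0 := rfl
@[simp] theorem imI_iq : iq.imI = 1 := rfl
@[simp] theorem imJ_iq : iq.imJ = 0 := rfl
@[simp] theorem imK_iq : iq.imK = 0 := rfl

theorem linearIndependent_one_q_iq_q_mul_iq {q : ℍ[ℝ]} (hjk : q.imJ ^ 2 + q.imK ^ 2 ≠ 0) :
    LinearIndependent ℝ ![1, q, iq, q * iq] := by
  rw [Fintype.linearIndependent_iff]
  intro g hg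
  replace hg : g 0 • 1 + g 1 • q + g 2 • iq + g 3 • (q * iq) = 0 := by
    simpa [Fin.sum_univ_four] using hg
  have hre := congrArg QuaternionAlgebra.re hg
  have hi := congrArg QuaternionAlgebra.imI hg
  have hj := congrArg QuaternionAlgebra.imJ hg
  have hk := congrArg QuaternionAlgebra.imK hg
  simp only [re_add, imI_add, imJ_add, imK_add, re_smul, imI_smul, imJ_smul, imK_smul, re_mul,
    imI_mul, imJ_mul, imK_mul, re_one, imI_one, imJ_one, imK_one, re_zero, imI_zero, imJ_zero,
    imK_zero, smul_eq_mul, re_iq, imI_iq, imJ_iq, imK_iq] at hre hi hj hk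
  have h1 : g 1 = 0 := by
    refine (mul_eq_zero.mp (?_ : g 1 * (q.imJ ^ 2 + q.imK ^ 2) = 0)).resolve_right hjk
    linear_combination q.imJ * hj + q.imK * hk
  have h3 : g 3 = 0 := by
    refine (mul_eq_zero.mp (?_ : g 3 * (q.imJ ^ 2 + q.imK ^ 2) = 0)).resolve_right hjk
    linear_combination q.imK * hj - q.imJ * hk
  intro i
  fin_cases i
  · show g 0 = 0
    linear_combination hre - q.re * h1 + q.imI * h3
  · exact h1
  · show g 2 = 0
    linear_combination hi - q.imI * h1 - q.re * h3
  · exact h3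

theorem imJ_sq_add_imK_sq_ne_zero {q : ℍ[ℝ]} (hq : q ^ 2 = -1) (hqi : q ≠ iq)
    (hqi' : q ≠ -iq) : q.imJ ^ 2 + q.imK ^ 2 ≠ 0 := by
  intro hjk
  have hj : q.imJ = 0 := by nlinarith [sq_nonneg q.imJ, sq_nonneg q.imK]
  have hk : q.imK = 0 := by nlinarith [sq_nonneg q.imJ, sq_nonneg q.imK]
  have hre := congrArg QuaternionAlgebra.re hq
  have hi := congrArg QuaternionAlgebra.imI hq
  simp only [sq, re_mul, imI_mul, hj, hk, re_neg, imI_neg, re_one, imI_one] at hre hi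
  have h0 : q.re = 0 := by nlinarith
  have hq_eq : q = q.imI • iq := by ext <;> simp [h0, hj, hk]
  rcases mul_eq_zero.mp (by nlinarith : (q.imI - 1) * (q.imI + 1) = 0) with h | h
  · exact hqi (by rw [hq_eq, sub_eq_zero.mp h, one_smul])
  · exact hqi' (by rw [hq_eq, eq_neg_of_add_eq_zero_left h, neg_one_smul])

theorem coeffs_eq_of_mul_eq {q u : ℍ[ℝ]} (hq : q ^ 2 = -1)
    (hli : LinearIndependent ℝ ![1, q, u, q * u]) {a b c a' b' c' : ℝ}
    (h : q * ((a' : ℍ[ℝ]) + b' • q + c' • u) = a + b • q + c • u) :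
    a = -b' ∧ b = a' ∧ c = 0 ∧ c' = 0 := by
  have hq' : q * q = -1 := by rw [← sq, hq]
  have hsum : (a + b') • 1 + (b - a') • q + c • u + (-c') • (q * u) = 0 := by
    have hcoe : ∀ r : ℝ, (r : ℍ[ℝ]) = r • 1 := fun r => by rw [← coe_mul_eq_smul, mul_one]
    rw [hcoe, hcoe, mul_add, mul_add, mul_smul_comm, mul_smul_comm, mul_smul_comm, mul_one,
      hq'] at h
    linear_combination (norm := module) -h
  have hg := Fintype.linearIndependent_iff.mp hli ![a + b', b - a', c, -c']
    (by simpa [Fin.sum_univ_four] using hsum)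
  obtain ⟨h0, h1, h2, h3⟩ : a + b' = 0 ∧ b - a' = 0 ∧ c = 0 ∧ -c' = 0 := ⟨hg 0, hg 1, hg 2, hg 3⟩
  exact ⟨by linarith, by linarith, h2, neg_eq_zero.mp h3⟩

theorem mulLeftLM_single {n : ℕ} (p : ℍ[ℝ]) (i : Fin n) (x : ℍ[ℝ]) :
    mulLeftLM n p (Pi.single i x) = Pi.single i (p * x) :=
  funext <| Pi.apply_single (fun _ => (p * ·)) (fun _ => mul_zero p) i x

section WkSub

variable {k : ℕ} {q u : ℍ[ℝ]}

theorem single_mem_WkSub (hk : 0 < k) (α β : ℝ) :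
    Pi.single ⟨0, hk⟩ (α • 1 + β • q) ∈ WkSub k q u := by
  refine ⟨Pi.single ⟨0, hk⟩ α, Pi.single 0 β, fun m hm => by simp [show m ≠ 0 by omega],
    fun t => ?_⟩
  rcases eq_or_ne t ⟨0, hk⟩ with rfl | ht
  · simp [← coe_mul_eq_smul]
  · have ht' : (t : ℕ) ≠ 0 := fun h => ht (Fin.ext h)
    simp [ht, ht']

theorem map_single_span_le_WkSub_inf (hk : 0 < k) (hq : q ^ 2 = -1) :
    (Submodule.span ℝ {1, q}).map (LinearMap.single ℝ (fun _ => ℍ[ℝ]) ⟨0, hk⟩) ≤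
      WkSub k q u ⊓ (WkSub k q u).map (mulLeftLM k q) := by
  rintro _ ⟨x, hx, rfl⟩
  obtain ⟨α, β, rfl⟩ := Submodule.mem_span_pair.mp hx
  refine ⟨single_mem_WkSub hk α β, _, single_mem_WkSub hk β (-α), ?_⟩
  rw [mulLeftLM_single]
  congr 1
  rw [mul_add, mul_smul_comm, mul_smul_comm, mul_one, ← sq, hq]
  module

theorem WkSub_inf_map_le_map_single_span (hk : 0 < k) (hq : q ^ 2 = -1)
    (hli : LinearIndependent ℝ ![1, q, u, q * u]) :
    WkSub k q u ⊓ (WkSub k q u).map (mulLeftLM k q) ≤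
      (Submodule.span ℝ {1, q}).map (LinearMap.single ℝ (fun _ => ℍ[ℝ]) ⟨0, hk⟩) := by
  rintro _ ⟨⟨a, b, hb, hy⟩, w, ⟨a', b', hb', hw⟩, rfl⟩
  have hcoeffs (t : Fin k) : a t = -b' t ∧ b t = a' t ∧ b (t + 1) = 0 ∧ b' (t + 1) = 0 :=
    coeffs_eq_of_mul_eq hq hli (by rw [← hw t]; exact hy t)
  have hb_pos (m : ℕ) (hm : m ≠ 0) : b m = 0 ∧ b' m = 0 := by
    obtain ⟨m, rfl⟩ := Nat.exists_eq_succ_of_ne_zero hm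
    rcases lt_or_ge m k with hmk | hmk
    · exact ⟨(hcoeffs ⟨m, hmk⟩).2.2.1, (hcoeffs ⟨m, hmk⟩).2.2.2⟩
    · exact ⟨hb _ (by omega), hb' _ (by omega)⟩
  refine ⟨a ⟨0, hk⟩ + b 0 • q, Submodule.mem_span_pair.mpr ⟨a ⟨0, hk⟩, b 0, ?_⟩,
    funext fun t => ?_⟩
  · rw [← coe_mul_eq_smul, mul_one]
  rw [LinearMap.coe_single, hy t]
  rcases eq_or_ne t ⟨0, hk⟩ with rfl | ht
  · simp [(hb_pos 1 one_ne_zero).1]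
  · have ht' : (t : ℕ) ≠ 0 := fun h => ht (Fin.ext h)
    simp [ht, (hcoeffs t).1, (hcoeffs t).2.2.1, (hb_pos t ht').1, (hb_pos t ht').2]

end WkSub

/-- For `k ≥ 1` and a unit imaginary quaternion `q ≠ ±i`, the real vector space
`W_{k,q} ∩ q•W_{k,q}` has dimension two. -/
theorem stmt13 (k : ℕ) (hk : 1 ≤ k) (q : Quaternion ℝ) (hq : q ^ 2 = -1)
    (hqi : q ≠ iq) (hqi' : q ≠ -iq) :
    Module.finrank ℝ ↥(WkSub k q iq ⊓ (WkSub k q iq).map (mulLeftLM k q)) = 2 := by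
  have hli := linearIndependent_one_q_iq_q_mul_iq (imJ_sq_add_imK_sq_ne_zero hq hqi hqi')
  have hli₂ : LinearIndependent ℝ ![1, q] := by
    convert hli.comp ![0, 1] (by decide) using 1
    funext i
    fin_cases i <;> rfl
  rw [le_antisymm (WkSub_inf_map_le_map_single_span hk hq hli)
      (map_single_span_le_WkSub_inf hk hq),
    ← (Submodule.equivMapOfInjective _
      (Pi.single_injective (M := fun _ : Fin k => ℍ[ℝ]) _) _).finrank_eq,
    ← Matrix.range_cons_cons_empty 1 q ![], finrank_span_eq_card hli₂, Fintype.card_fin]
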